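/- If π is a permutation of length n ≥ 3 with at most one descent that either begins with the values 1,2 in positions 1,2 or ends with the values n−1,n in positions n−1,n, then μ(1, π) = 0 in the pattern containment poset. -/

import Mathlib

open scoped Classical

/-- `σ` occurs as a pattern in `π`. -/
def Occurs {k n : ℕ} (σ : Equiv.Perm (Fin k)) (π : Equiv.Perm (Fin n)) : Prop :=
  ∃ f : Fin k → Fin n, StrictMono f ∧ ∀ a b : Fin k, σ a < σ b ↔ π (f a) < π (f b)

/-- A permutation of arbitrary length. -/
abbrev PermWord := Σ n : ℕ, Equiv.Perm (Fin n)

/-- Pattern containment order. -/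
def PatLE (σ π : PermWord) : Prop := Occurs σ.2 π.2

def PatLT (σ π : PermWord) : Prop := PatLE σ π ∧ σ ≠ π

/-- The permutation 1 of length one. -/
def permOne : PermWord := ⟨1, 1⟩

/-- `mu` is the Möbius function of the pattern containment poset. -/
def IsMobius (mu : PermWord → PermWord → ℤ) : Prop :=
  (∀ σ, mu σ σ = 1) ∧
  (∀ σ π : PermWord, PatLT σ π →
      mu σ π = - ∑ m ∈ Finset.range (π.1 + 1), ∑ z : Equiv.Perm (Fin m),
        if PatLE σ ⟨m, z⟩ ∧ PatLT ⟨m, z⟩ π then mu σ ⟨m, z⟩ else 0) ∧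
  (∀ σ π : PermWord, ¬ PatLE σ π → mu σ π = 0)

/-- `π` has a descent at (0-based) position `i`. -/
def descends {n : ℕ} (π : Equiv.Perm (Fin n)) (i : ℕ) : Prop :=
  ∃ h : i + 1 < n, π ⟨i + 1, h⟩ < π ⟨i, Nat.lt_of_succ_lt h⟩

/-- Number of descents of `π`. -/
noncomputable def descentCount {n : ℕ} (π : Equiv.Perm (Fin n)) : ℕ :=
  ((Finset.range n).filter fun i => descends π i).card

/-- `π` has an (increasing) adjacency at (0-based) position `i`. -/
def adjAt {n : ℕ} (π : Equiv.Perm (Fin n)) (i : ℕ) : Prop :=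
  ∃ h : i + 1 < n, (π ⟨i + 1, h⟩ : ℕ) = (π ⟨i, Nat.lt_of_succ_lt h⟩ : ℕ) + 1

/-- `π` has a decreasing adjacency at (0-based) position `i`. -/
def adjAtDesc {n : ℕ} (π : Equiv.Perm (Fin n)) (i : ℕ) : Prop :=
  ∃ h : i + 1 < n, (π ⟨i, Nat.lt_of_succ_lt h⟩ : ℕ) = (π ⟨i + 1, h⟩ : ℕ) + 1

/-- Number of adjacencies of `π` (a run of `k+1` consecutive values counts as `k`). -/
noncomputable def adjCount {n : ℕ} (π : Equiv.Perm (Fin n)) : ℕ :=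
  ((Finset.range n).filter fun i => adjAt π i).card

/-- `π` begins with the value 1 (0-based value 0). -/
def beginsWithOne {n : ℕ} (π : Equiv.Perm (Fin n)) : Prop :=
  ∃ h : 0 < n, (π ⟨0, h⟩ : ℕ) = 0

/-- `π` ends with the value `n` (0-based value `n-1`). -/
def endsWithTop {n : ℕ} (π : Equiv.Perm (Fin n)) : Prop :=
  ∃ h : 0 < n, (π ⟨n - 1, Nat.sub_lt h one_pos⟩ : ℕ) = n - 1

open Equiv Equiv.Perm Finset

section OccursLemmas
variable {k n m N : ℕ}

lemma occurs_refl (π : Perm (Fin n)) : Occurs π π :=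
  ⟨id, strictMono_id, fun _ _ => Iff.rfl⟩

lemma occurs_trans {σ : Perm (Fin k)} {τ : Perm (Fin m)} {π : Perm (Fin n)}
    (h1 : Occurs σ τ) (h2 : Occurs τ π) : Occurs σ π := by
  obtain ⟨f, hf, hf2⟩ := h1; obtain ⟨g, hg, hg2⟩ := h2
  exact ⟨g ∘ f, hg.comp hf, fun a b => (hf2 a b).trans (hg2 (f a) (f b))⟩

lemma occurs_len_le {σ : Perm (Fin k)} {π : Perm (Fin n)} (h : Occurs σ π) : k ≤ n := by
  obtain ⟨f, hf, -⟩ := h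
  simpa using Fintype.card_le_of_injective f hf.injective

lemma strictMono_fin_self_eq_id {f : Fin n → Fin n} (hf : StrictMono f) : f = id := by
  have hsurj : Function.Surjective f :=
    Finite.surjective_of_injective hf.injective
  funext i
  have := Fin.coe_orderIso_apply (StrictMono.orderIsoOfSurjective f hf hsurj) i
  rw [StrictMono.coe_orderIsoOfSurjective] at this
  exact Fin.ext this

lemma occurs_eq_of_len_eq {σ π : Perm (Fin n)} (h : Occurs σ π) : σ = π := by
  obtain ⟨f, hf, hiff⟩ := h
  rw [strictMono_fin_self_eq_id hf] at hiff
  -- σ a < σ b ↔ π a < π b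
  have key : StrictMono (fun x => σ (π.symm x)) := by
    intro x y hxy
    exact (hiff (π.symm x) (π.symm y)).2 (by simpa using hxy)
  have hid := strictMono_fin_self_eq_id key
  exact Equiv.ext fun a => by simpa using congrFun hid (π a)

lemma occurs_one_iff {z : Perm (Fin m)} : Occurs (1 : Perm (Fin 1)) z ↔ 1 ≤ m := by
  constructor
  · rintro ⟨f, -, -⟩; exact (f 0).pos
  · intro h
    refine ⟨fun _ => ⟨0, h⟩, fun a b hab => absurd hab (by simp [Subsingleton.elim a b]), ?_⟩
    intro a b
    simp [Subsingleton.elim a b]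

lemma occurs_zero {z : Perm (Fin 0)} {π : Perm (Fin n)} : Occurs z π :=
  ⟨fun a => a.elim0, fun a => a.elim0, fun a => a.elim0⟩

end OccursLemmas

section PatLemmas

lemma patlt_iff_lt {m N : ℕ} (z : Perm (Fin m)) (π : Perm (Fin N)) :
    PatLT ⟨m, z⟩ ⟨N, π⟩ ↔ m < N ∧ Occurs z π := by
  constructor
  · rintro ⟨hocc, hne⟩
    refine ⟨?_, hocc⟩
    rcases Nat.lt_or_ge m N with h | h
    · exact h
    · exfalso
      have hmN : m = N := le_antisymm (occurs_len_le hocc) h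
      subst hmN
      exact hne (congrArg (Sigma.mk m) (occurs_eq_of_len_eq hocc))
  · rintro ⟨hlt, hocc⟩
    refine ⟨hocc, fun hc => ?_⟩
    exact absurd (congrArg Sigma.fst hc) (by simpa using hlt.ne)

lemma patle_one_iff {m : ℕ} (z : Perm (Fin m)) : PatLE permOne ⟨m, z⟩ ↔ 1 ≤ m :=
  occurs_one_iff

end PatLemmas

section Op
variable {n m k : ℕ}

/-- Prepend the value 0 at the front: `Op w = 0 ⊕ w`. -/
def Op (w : Perm (Fin n)) : Perm (Fin (n + 1)) := Equiv.Perm.decomposeFin.symm (0, w)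

@[simp] lemma Op_zero (w : Perm (Fin n)) : Op w 0 = 0 :=
  Equiv.Perm.decomposeFin_symm_apply_zero 0 w

@[simp] lemma Op_succ (w : Perm (Fin n)) (i : Fin n) : Op w i.succ = (w i).succ := by
  simp [Op, Equiv.Perm.decomposeFin_symm_apply_succ]

lemma Op_ne_zero (w : Perm (Fin n)) {x : Fin (n+1)} (hx : x ≠ 0) : Op w x ≠ 0 := by
  intro h
  exact hx ((Op w).injective (h.trans (Op_zero w).symm))

lemma Op_decompose (z : Perm (Fin (n+1))) (h : z 0 = 0) :
    Op (Equiv.Perm.decomposeFin z).2 = z := by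
  have h1 : Equiv.Perm.decomposeFin.symm (Equiv.Perm.decomposeFin z) = z :=
    Equiv.Perm.decomposeFin.symm_apply_apply z
  have h3 := Equiv.Perm.decomposeFin_symm_apply_zero (Equiv.Perm.decomposeFin z).1
    (Equiv.Perm.decomposeFin z).2
  rw [Prod.mk.eta, h1, h] at h3
  rw [Op, h3, Prod.mk.eta, h1]

lemma Op_pred (t : Perm (Fin n)) {x : Fin (n+1)} (hx : x ≠ 0) :
    Op t x = (t (x.pred hx)).succ := by
  conv_lhs => rw [← Fin.succ_pred x hx]
  rw [Op_succ]

@[simp] lemma decompose_Op (w : Perm (Fin n)) :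
    (Equiv.Perm.decomposeFin (Op w)).2 = w := by
  rw [Op, Equiv.apply_symm_apply]

/-- z ≤ t → z ≤ 0⊕t -/
lemma occurs_op_of_occurs {z : Perm (Fin m)} {t : Perm (Fin n)} (h : Occurs z t) :
    Occurs z (Op t) := by
  obtain ⟨f, hf, hiff⟩ := h
  refine ⟨fun a => (f a).succ, fun a b hab => by simpa using hf hab, fun a b => ?_⟩
  rw [hiff a b]
  simp [Fin.succ_lt_succ_iff]

/-- w ≤ t → 0⊕w ≤ 0⊕t -/
lemma occurs_op_op {w : Perm (Fin m)} {t : Perm (Fin n)} (h : Occurs w t) :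
    Occurs (Op w) (Op t) := by
  obtain ⟨f, hf, hiff⟩ := h
  refine ⟨Fin.cases 0 (fun a => (f a).succ), ?_, ?_⟩
  · intro a b hab
    induction a using Fin.cases with
    | zero =>
      induction b using Fin.cases with
      | zero => exact absurd hab (lt_irrefl _)
      | succ b => simpa using Fin.succ_pos (f b)
    | succ a =>
      induction b using Fin.cases with
      | zero => exact absurd hab (by simp [Fin.lt_iff_val_lt_val])
      | succ b =>
        have : a < b := by simpa [Fin.succ_lt_succ_iff] using hab
        simpa [Fin.succ_lt_succ_iff] using hf this
  · intro a b
    induction a using Fin.cases with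
    | zero =>
      induction b using Fin.cases with
      | zero => simp
      | succ b => simp [Fin.succ_pos]
    | succ a =>
      induction b using Fin.cases with
      | zero => simp [Fin.lt_iff_val_lt_val]
      | succ b => simp [Fin.succ_lt_succ_iff, hiff a b]

/-- 0⊕w ≤ t → w ≤ t -/
lemma occurs_of_op_occurs {w : Perm (Fin m)} {t : Perm (Fin n)} (h : Occurs (Op w) t) :
    Occurs w t := by
  obtain ⟨f, hf, hiff⟩ := h
  refine ⟨fun a => f a.succ, fun a b hab => hf (by simpa using hab), fun a b => ?_⟩
  have := hiff a.succ b.succ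
  simpa [Fin.succ_lt_succ_iff] using this

/-- If an occurrence sends some index to a position whose value is the minimum 0,
then the pattern's value there is 0. -/
lemma pattern_min_of_occ {z : Perm (Fin (m+1))} {t : Perm (Fin (n+1))}
    (f : Fin (m+1) → Fin (n+1)) (hf : StrictMono f)
    (hiff : ∀ a b, z a < z b ↔ t (f a) < t (f b)) {a : Fin (m+1)}
    (ha : t (f a) = 0) : z a = 0 := by
  by_contra hza
  obtain ⟨b, hb⟩ : ∃ b, z b = 0 := ⟨z.symm 0, by simp⟩
  have hba : b ≠ a := fun h => hza (h ▸ hb)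
  have : z a < z b := by
    rw [hiff a b]
    rw [ha]
    have : t (f b) ≠ 0 := by
      intro h0
      exact hba (hf.injective (t.injective (h0.trans ha.symm)))
    exact Fin.pos_of_ne_zero this
  rw [hb] at this
  exact absurd this (by simp [Fin.lt_iff_val_lt_val])

/-- Key characterization: z ≤ 0⊕t iff z ≤ t, or z = 0⊕w with w ≤ t. -/
lemma occurs_op_iff {z : Perm (Fin (m+1))} {t : Perm (Fin n)} :
    Occurs z (Op t) ↔ Occurs z t ∨ (z 0 = 0 ∧ Occurs (Equiv.Perm.decomposeFin z).2 t) := by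
  constructor
  · rintro ⟨f, hf, hiff⟩
    by_cases h0 : f 0 = 0
    · -- uses position 0
      have hz0 : z 0 = 0 := pattern_min_of_occ f hf hiff (by rw [h0]; simp)
      refine Or.inr ⟨hz0, ?_⟩
      set w := (Equiv.Perm.decomposeFin z).2 with hw
      have hzop : Op w = z := Op_decompose z hz0
      have hfs : ∀ a : Fin m, f a.succ ≠ 0 := by
        intro a h
        have : f 0 < f a.succ := hf (Fin.succ_pos a)
        rw [h, h0] at this
        exact absurd this (lt_irrefl _)
      refine ⟨fun a => (f a.succ).pred (hfs a), ?_, ?_⟩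
      · intro a b hab
        have : f a.succ < f b.succ := hf (by simpa using hab)
        simpa [Fin.pred_lt_pred_iff] using this
      · intro a b
        have h1 : w a < w b ↔ z a.succ < z b.succ := by
          rw [← hzop]
          simp [Fin.succ_lt_succ_iff]
        rw [h1, hiff a.succ b.succ]
        rw [Op_pred t (hfs a), Op_pred t (hfs b), Fin.succ_lt_succ_iff]
    · -- avoids position 0
      left
      have hfs : ∀ a : Fin (m+1), f a ≠ 0 := by
        intro a h
        have : f 0 ≤ f a := hf.monotone (Fin.zero_le a)
        rw [h] at this
        exact h0 (Fin.le_zero_iff.mp this)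
      refine ⟨fun a => (f a).pred (hfs a), ?_, ?_⟩
      · intro a b hab
        simpa [Fin.pred_lt_pred_iff] using hf hab
      · intro a b
        rw [hiff a b]
        rw [Op_pred t (hfs a), Op_pred t (hfs b), Fin.succ_lt_succ_iff]
  · rintro (h | ⟨hz0, h⟩)
    · exact occurs_op_of_occurs h
    · rw [← Op_decompose z hz0]
      exact occurs_op_op h

end Op

section HeadZero

def HeadZero {m : ℕ} (w : Perm (Fin m)) : Prop :=
  ∀ x : Fin m, (x : ℕ) = 0 → ((w x : Fin m) : ℕ) = 0

lemma headZero_iff {m : ℕ} (w : Perm (Fin (m+1))) : HeadZero w ↔ w 0 = 0 := by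
  constructor
  · intro h; exact Fin.ext (h 0 rfl)
  · intro h x hx
    have : x = 0 := Fin.ext hx
    rw [this, h]
    rfl

lemma headZero_op {m : ℕ} (w : Perm (Fin m)) : HeadZero (Op w) :=
  (headZero_iff _).2 (Op_zero w)

/-- w ≤ t, t starts with min, w doesn't (or len w = 1): then 0⊕w ≤ t.
First a version from an occurrence avoiding position 0. -/
lemma occurs_op_of_avoid {m n : ℕ} {w : Perm (Fin (m+1))} {t : Perm (Fin (n+1))}
    (ht : t 0 = 0) (g : Fin (m+1) → Fin (n+1)) (hg : StrictMono g)
    (hiff : ∀ a b, w a < w b ↔ t (g a) < t (g b)) (h0 : ∀ a, g a ≠ 0) :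
    Occurs (Op w) t := by
  have htg : ∀ a, t (g a) ≠ 0 := by
    intro a h
    exact h0 a (t.injective (h.trans ht.symm))
  refine ⟨Fin.cases 0 g, ?_, ?_⟩
  · intro a b hab
    induction a using Fin.cases with
    | zero =>
      induction b using Fin.cases with
      | zero => exact absurd hab (lt_irrefl _)
      | succ b => exact Fin.pos_of_ne_zero (h0 b)
    | succ a =>
      induction b using Fin.cases with
      | zero => exact absurd hab (by simp [Fin.lt_iff_val_lt_val])
      | succ b => exact hg (by simpa using hab)
  · intro a b
    induction a using Fin.cases with
    | zero =>
      induction b using Fin.cases with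
      | zero => simp
      | succ b =>
        simp only [Fin.cases_zero, Fin.cases_succ, Op_zero, Op_succ]
        rw [ht]
        constructor
        · intro _; exact Fin.pos_of_ne_zero (htg b)
        · intro _; exact Fin.succ_pos (w b)
    | succ a =>
      induction b using Fin.cases with
      | zero =>
        simp only [Fin.cases_zero, Fin.cases_succ, Op_zero, Op_succ]
        rw [ht]
        constructor
        · intro h; exact absurd h (by simp [Fin.lt_iff_val_lt_val])
        · intro h; exact absurd h (by simp [Fin.le_zero_iff.symm, Fin.lt_iff_val_lt_val])
      | succ b =>
        simp only [Fin.cases_succ, Op_succ, Fin.succ_lt_succ_iff]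
        exact hiff a b

lemma occurs_op_head {m n : ℕ} {w : Perm (Fin (m+1))} {t : Perm (Fin (n+1))}
    (ht : t 0 = 0) (hw : w 0 ≠ 0) (hocc : Occurs w t) : Occurs (Op w) t := by
  obtain ⟨g, hg, hiff⟩ := hocc
  have h0 : ∀ a, g a ≠ 0 := by
    intro a ha
    have hg0 : g 0 = 0 := by
      have : g 0 ≤ g a := hg.monotone (Fin.zero_le a)
      rw [ha] at this
      exact Fin.le_zero_iff.mp this
    exact hw (pattern_min_of_occ g hg hiff (by rw [hg0, ht]))
  exact occurs_op_of_avoid ht g hg hiff h0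

lemma occurs_op_single {n : ℕ} {w : Perm (Fin 1)} {t : Perm (Fin (n+1))}
    (ht : t 0 = 0) (hn : 1 ≤ n) : Occurs (Op w) t := by
  refine occurs_op_of_avoid ht (fun _ => ⟨1, by omega⟩) ?_ ?_ ?_
  · intro a b hab
    have : a = b := Fin.ext (by omega)
    exact absurd hab (this ▸ lt_irrefl a)
  · intro a b
    have : a = b := Fin.ext (by omega)
    simp [this]
  · intro a; simp [Fin.ext_iff]

lemma occurs_of_one {n : ℕ} {u : Perm (Fin 1)} {t : Perm (Fin (n+1))} : Occurs u t := by
  refine ⟨fun _ => 0, ?_, ?_⟩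
  · intro a b hab
    have : a = b := Fin.ext (by omega)
    exact absurd hab (this ▸ lt_irrefl a)
  · intro a b
    have : a = b := Fin.ext (by omega)
    simp [this]

end HeadZero

section MuLayer
variable {mu : PermWord → PermWord → ℤ} (hmu : IsMobius mu)
include hmu

lemma mu_rec {N : ℕ} (π : Perm (Fin N)) (h2 : 2 ≤ N) :
    mu permOne ⟨N, π⟩ = -∑ m ∈ Finset.range N, ∑ z : Perm (Fin m),
      if 1 ≤ m ∧ Occurs z π then mu permOne ⟨m, z⟩ else 0 := by
  have hlt : PatLT permOne ⟨N, π⟩ :=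
    (patlt_iff_lt 1 π).2 ⟨by omega, occurs_one_iff.mpr (by omega)⟩
  rw [hmu.2.1 _ _ hlt]
  congr 1
  have hN : (⟨N, π⟩ : PermWord).1 + 1 = N + 1 := rfl
  rw [show (Finset.range ((⟨N, π⟩ : PermWord).1 + 1)) = Finset.range (N+1) from rfl]
  rw [Finset.sum_range_succ]
  have last0 : (∑ z : Perm (Fin N),
      if PatLE permOne ⟨N, z⟩ ∧ PatLT ⟨N, z⟩ ⟨N, π⟩ then mu permOne ⟨N, z⟩ else 0) = 0 := by
    apply Finset.sum_eq_zero
    intro z _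
    rw [if_neg]
    rintro ⟨-, hlt2⟩
    rw [patlt_iff_lt] at hlt2
    exact absurd hlt2.1 (lt_irrefl N)
  rw [last0, add_zero]
  apply Finset.sum_congr rfl
  intro m hm
  apply Finset.sum_congr rfl
  intro z _
  have hmN : m < N := Finset.mem_range.mp hm
  apply if_congr _ rfl rfl
  rw [patle_one_iff, patlt_iff_lt]
  exact ⟨fun ⟨a, b⟩ => ⟨a, b.2⟩, fun ⟨a, b⟩ => ⟨a, hmN, b⟩⟩

/-- the full interval sum up to and including `t` vanishes -/
lemma sum_all {N : ℕ} (t : Perm (Fin N)) (h2 : 2 ≤ N) :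
    (∑ m ∈ Finset.range (N+1), ∑ z : Perm (Fin m),
      if 1 ≤ m ∧ Occurs z t then mu permOne ⟨m, z⟩ else 0) = 0 := by
  rw [Finset.sum_range_succ]
  have hlast : (∑ z : Perm (Fin N),
      if 1 ≤ N ∧ Occurs z t then mu permOne ⟨N, z⟩ else 0) = mu permOne ⟨N, t⟩ := by
    rw [Finset.sum_eq_single t]
    · rw [if_pos ⟨by omega, occurs_refl t⟩]
    · intro z _ hz
      rw [if_neg]
      rintro ⟨-, h⟩
      exact hz (occurs_eq_of_len_eq h)
    · intro h; exact absurd (Finset.mem_univ t) h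
  rw [hlast, mu_rec hmu t h2]
  exact add_neg_cancel _

omit hmu in
/-- generic reindexing of a double sum over permutations starting with 0 -/
lemma reindex (k : ℕ) (F : ∀ m : ℕ, Perm (Fin m) → ℤ)
    (hF : ∀ m (z : Perm (Fin (m+1))), z 0 ≠ 0 → F (m+1) z = 0)
    (h0 : ∀ z : Perm (Fin 0), F 0 z = 0) :
    (∑ m ∈ Finset.range (k+2), ∑ z : Perm (Fin m), F m z)
      = ∑ m ∈ Finset.range (k+1), ∑ w : Perm (Fin m), F (m+1) (Op w) := by
  rw [Finset.sum_range_succ']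
  rw [show (∑ z : Perm (Fin 0), F 0 z) = 0 from Finset.sum_eq_zero fun z _ => h0 z, add_zero]
  apply Finset.sum_congr rfl
  intro m _
  rw [← Equiv.sum_comp (Equiv.Perm.decomposeFin.symm) (fun z : Perm (Fin (m+1)) => F (m+1) z)]
  rw [Fintype.sum_prod_type]
  rw [Finset.sum_eq_single (0 : Fin (m+1))]
  · rfl
  · intro p _ hp
    apply Finset.sum_eq_zero
    intro w _
    apply hF
    rw [Equiv.Perm.decomposeFin_symm_apply_zero]
    exact hp
  · intro h; exact absurd (Finset.mem_univ _) h

/-- main decomposition of μ(1, 0⊕t) -/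
lemma mu_Op {k : ℕ} (t : Perm (Fin (k+1))) :
    mu permOne ⟨k+2, Op t⟩ =
      -((∑ m ∈ Finset.range (k+2), ∑ z : Perm (Fin m),
          if 1 ≤ m ∧ Occurs z t then mu permOne ⟨m, z⟩ else 0)
        + ∑ m ∈ Finset.range (k+1), ∑ w : Perm (Fin m),
          if Occurs w t ∧ ¬ Occurs (Op w) t then mu permOne ⟨m+1, Op w⟩ else 0) := by
  rw [mu_rec hmu (Op t) (by omega)]
  congr 1
  have split : ∀ m (z : Perm (Fin m)),
      (if 1 ≤ m ∧ Occurs z (Op t) then mu permOne ⟨m, z⟩ else 0)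
      = (if 1 ≤ m ∧ Occurs z t then mu permOne ⟨m, z⟩ else 0)
        + (if 1 ≤ m ∧ ¬ Occurs z t ∧ Occurs z (Op t) then mu permOne ⟨m, z⟩ else 0) := by
    intro m z
    by_cases h1 : 1 ≤ m
    · by_cases h2 : Occurs z t
      · rw [if_pos ⟨h1, occurs_op_of_occurs h2⟩, if_pos ⟨h1, h2⟩, if_neg (by tauto), add_zero]
      · by_cases h3 : Occurs z (Op t)
        · rw [if_pos ⟨h1, h3⟩, if_neg (by tauto), if_pos ⟨h1, h2, h3⟩, zero_add]
        · rw [if_neg (by tauto), if_neg (by tauto), if_neg (by tauto), add_zero]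
    · rw [if_neg (by tauto), if_neg (by tauto), if_neg (by tauto), add_zero]
  have e1 : (∑ m ∈ Finset.range (k+2), ∑ z : Perm (Fin m),
        if 1 ≤ m ∧ Occurs z (Op t) then mu permOne ⟨m, z⟩ else 0)
      = (∑ m ∈ Finset.range (k+2), ∑ z : Perm (Fin m),
          if 1 ≤ m ∧ Occurs z t then mu permOne ⟨m, z⟩ else 0)
        + ∑ m ∈ Finset.range (k+2), ∑ z : Perm (Fin m),
          if 1 ≤ m ∧ ¬ Occurs z t ∧ Occurs z (Op t) then mu permOne ⟨m, z⟩ else 0 := by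
    rw [← Finset.sum_add_distrib]
    apply Finset.sum_congr rfl
    intro m _
    rw [← Finset.sum_add_distrib]
    apply Finset.sum_congr rfl
    intro z _
    exact split m z
  rw [e1]
  congr 1
  rw [reindex k (fun m z => if 1 ≤ m ∧ ¬ Occurs z t ∧ Occurs z (Op t) then mu permOne ⟨m, z⟩ else 0)]
  · apply Finset.sum_congr rfl
    intro m _
    apply Finset.sum_congr rfl
    intro w _
    apply if_congr _ rfl rfl
    constructor
    · rintro ⟨-, hno, hocc⟩
      rcases occurs_op_iff.1 hocc with h | ⟨-, h⟩
      · exact absurd h hno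
      · rw [decompose_Op] at h
        exact ⟨h, hno⟩
    · rintro ⟨hw, hno⟩
      exact ⟨by omega, hno, occurs_op_op hw⟩
  · intro m z hz
    rw [if_neg]
    rintro ⟨-, hno, hocc⟩
    rcases occurs_op_iff.1 hocc with h | ⟨h, -⟩
    · exact hno h
    · exact hz h
  · intro z
    rw [if_neg]
    rintro ⟨h, -⟩
    omega

end MuLayer

section Key
variable {mu : PermWord → PermWord → ℤ} (hmu : IsMobius mu)
include hmu

set_option maxHeartbeats 1000000 in
theorem key (k : ℕ) : ∀ t : Perm (Fin (k+1)),
    (t 0 = 0 → 1 ≤ k → mu permOne ⟨k+2, Op t⟩ = 0) ∧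
    ((k = 0 ∨ t 0 ≠ 0) → mu permOne ⟨k+2, Op t⟩ = - mu permOne ⟨k+1, t⟩) := by
  induction k using Nat.strong_induction_on with
  | _ k IH =>
  intro t
  constructor
  · -- Case A : t starts with its minimum
    intro ht hk
    rw [mu_Op hmu t, sum_all hmu t (by omega)]
    have hE : (∑ m ∈ Finset.range (k+1), ∑ w : Perm (Fin m),
        if Occurs w t ∧ ¬ Occurs (Op w) t then mu permOne ⟨m+1, Op w⟩ else 0) = 0 := by
      apply Finset.sum_eq_zero
      intro m hm
      apply Finset.sum_eq_zero
      intro w _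
      cases m with
      | zero =>
        have hOp : Occurs (Op w) t := occurs_of_one
        rw [if_neg]
        rintro ⟨-, hno⟩
        exact hno hOp
      | succ j =>
        have hjk : j < k := by have := Finset.mem_range.mp hm; omega
        by_cases hw0 : w 0 = 0
        · by_cases hj : 1 ≤ j
          · have hz : mu permOne ⟨j+1+1, Op w⟩ = 0 := (IH j hjk w).1 hw0 hj
            rw [hz, ite_self]
          · have hj0 : j = 0 := by omega
            subst hj0
            have hOp : Occurs (Op w) t := occurs_op_single ht hk
            rw [if_neg]
            rintro ⟨-, hno⟩
            exact hno hOp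
        · rw [if_neg]
          rintro ⟨hocc, hno⟩
          exact hno (occurs_op_head ht hw0 hocc)
    rw [hE]
    norm_num
  · -- Case B
    intro hB
    rcases Nat.eq_zero_or_pos k with rfl | hk
    · -- k = 0
      haveI : Subsingleton (Fin (0+1)) := ⟨fun a b => Fin.ext (by omega)⟩
      rw [mu_Op hmu t]
      have h1 : (∑ m ∈ Finset.range (0+2), ∑ z : Perm (Fin m),
          if 1 ≤ m ∧ Occurs z t then mu permOne ⟨m, z⟩ else 0) = mu permOne ⟨0+1, t⟩ := by
        rw [Finset.sum_range_succ, Finset.sum_range_one]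
        have hz0 : (∑ z : Perm (Fin 0),
            if 1 ≤ 0 ∧ Occurs z t then mu permOne ⟨0, z⟩ else 0) = 0 := by
          apply Finset.sum_eq_zero
          intro z _
          rw [if_neg]
          rintro ⟨h, -⟩
          omega
        have hz1 : (∑ z : Perm (Fin (0+1)),
            if 1 ≤ 0+1 ∧ Occurs z t then mu permOne ⟨0+1, z⟩ else 0) = mu permOne ⟨0+1, t⟩ := by
          rw [Finset.sum_eq_single t]
          · rw [if_pos ⟨by omega, occurs_refl t⟩]
          · intro z _ hz
            exact absurd (Subsingleton.elim z t) hz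
          · intro h; exact absurd (Finset.mem_univ t) h
        rw [hz0, hz1, zero_add]
      have h2 : (∑ m ∈ Finset.range (0+1), ∑ w : Perm (Fin m),
          if Occurs w t ∧ ¬ Occurs (Op w) t then mu permOne ⟨m+1, Op w⟩ else 0) = 0 := by
        rw [Finset.sum_range_one]
        apply Finset.sum_eq_zero
        intro w _
        have hOp : Occurs (Op w) t := occurs_of_one
        rw [if_neg]
        rintro ⟨-, hno⟩
        exact hno hOp
      rw [h1, h2, add_zero]
    · -- k ≥ 1
      have ht0 : t 0 ≠ 0 := by
        rcases hB with h | h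
        · omega
        · exact h
      have hmain := mu_Op hmu t
      rw [sum_all hmu t (by omega), zero_add] at hmain
      have hG : mu permOne ⟨k+1, t⟩ = -∑ m ∈ Finset.range (k+1), ∑ w : Perm (Fin m),
          if 1 ≤ m ∧ Occurs w t then mu permOne ⟨m, w⟩ else 0 := mu_rec hmu t (by omega)
      -- step 3 : E + G = S1 + S2
      have step3 : (∑ m ∈ Finset.range (k+1), ∑ w : Perm (Fin m),
            if Occurs w t ∧ ¬ Occurs (Op w) t then mu permOne ⟨m+1, Op w⟩ else 0)
          + (∑ m ∈ Finset.range (k+1), ∑ w : Perm (Fin m),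
            if 1 ≤ m ∧ Occurs w t then mu permOne ⟨m, w⟩ else 0)
          = (∑ m ∈ Finset.range (k+1), ∑ w : Perm (Fin m),
            if 1 ≤ m ∧ ¬ (HeadZero w ∧ 2 ≤ m) ∧ Occurs w t ∧ Occurs (Op w) t
              then mu permOne ⟨m, w⟩ else 0)
          + (∑ m ∈ Finset.range (k+1), ∑ w : Perm (Fin m),
            if 2 ≤ m ∧ HeadZero w ∧ Occurs w t then mu permOne ⟨m, w⟩ else 0) := by
        rw [← Finset.sum_add_distrib, ← Finset.sum_add_distrib]
        apply Finset.sum_congr rfl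
        intro m hm
        rw [← Finset.sum_add_distrib, ← Finset.sum_add_distrib]
        apply Finset.sum_congr rfl
        intro w _
        cases m with
        | zero =>
          have hOp : Occurs (Op w) t := occurs_of_one
          simp [hOp]
        | succ j =>
          have hjk : j < k := by have := Finset.mem_range.mp hm; omega
          have hm1 : 1 ≤ j + 1 := by omega
          by_cases hab : w 0 = 0 ∧ 1 ≤ j
          · have hz : mu permOne ⟨j+1+1, Op w⟩ = 0 := (IH j hjk w).1 hab.1 hab.2
            have hHZ : HeadZero w := (headZero_iff w).2 hab.1
            have h2j : 2 ≤ j + 1 := by omega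
            by_cases hocc : Occurs w t <;> simp [hz, hHZ, h2j, hocc, hm1]
          · have hb : j = 0 ∨ w 0 ≠ 0 := by
              rcases Nat.eq_zero_or_pos j with h | h
              · exact Or.inl h
              · exact Or.inr fun hw => hab ⟨hw, h⟩
            have hBB : mu permOne ⟨j+1+1, Op w⟩ = - mu permOne ⟨j+1, w⟩ := (IH j hjk w).2 hb
            have hnHZ : ¬ (HeadZero w ∧ 2 ≤ j+1) := by
              rintro ⟨h1, h2⟩
              exact hab ⟨(headZero_iff w).1 h1, by omega⟩
            by_cases hHZw : HeadZero w
            · have hj2 : ¬ (2 ≤ j + 1) := fun h2 => hnHZ ⟨hHZw, h2⟩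
              by_cases hocc : Occurs w t <;> by_cases hO : Occurs (Op w) t <;>
                simp [hBB, hHZw, hj2, hocc, hO, hm1]
            · by_cases hocc : Occurs w t <;> by_cases hO : Occurs (Op w) t <;>
                simp [hBB, hHZw, hocc, hO, hm1]
      -- step 4 part 1 : S1 rewritten
      have s1eq : (∑ m ∈ Finset.range (k+1), ∑ w : Perm (Fin m),
            if 1 ≤ m ∧ ¬ (HeadZero w ∧ 2 ≤ m) ∧ Occurs w t ∧ Occurs (Op w) t
              then mu permOne ⟨m, w⟩ else 0)
          = ∑ m ∈ Finset.range (k+1), ∑ w : Perm (Fin m),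
            if 1 ≤ m ∧ Occurs (Op w) t then - mu permOne ⟨m+1, Op w⟩ else 0 := by
        apply Finset.sum_congr rfl
        intro m hm
        apply Finset.sum_congr rfl
        intro w _
        cases m with
        | zero => simp
        | succ j =>
          have hjk : j < k := by have := Finset.mem_range.mp hm; omega
          have hm1 : 1 ≤ j + 1 := by omega
          have himp : Occurs (Op w) t → Occurs w t := occurs_of_op_occurs
          by_cases hab : w 0 = 0 ∧ 1 ≤ j
          · have hz : mu permOne ⟨j+1+1, Op w⟩ = 0 := (IH j hjk w).1 hab.1 hab.2
            have hHZ : HeadZero w := (headZero_iff w).2 hab.1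
            have h2j : 2 ≤ j + 1 := by omega
            simp [hz, hHZ, h2j]
          · have hb : j = 0 ∨ w 0 ≠ 0 := by
              rcases Nat.eq_zero_or_pos j with h | h
              · exact Or.inl h
              · exact Or.inr fun hw => hab ⟨hw, h⟩
            have hBB : mu permOne ⟨j+1+1, Op w⟩ = - mu permOne ⟨j+1, w⟩ := (IH j hjk w).2 hb
            have hnHZ : ¬ (HeadZero w ∧ 2 ≤ j+1) := by
              rintro ⟨h1, h2⟩
              exact hab ⟨(headZero_iff w).1 h1, by omega⟩
            by_cases hO : Occurs (Op w) t
            · have hocc : Occurs w t := himp hO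
              by_cases hHZw : HeadZero w
              · have hj2 : ¬ (2 ≤ j + 1) := fun h2 => hnHZ ⟨hHZw, h2⟩
                simp [hBB, hHZw, hj2, hocc, hO, hm1]
              · simp [hBB, hHZw, hocc, hO, hm1]
            · simp [hO]
      -- step 4 part 2 : S2 rewritten via reindexing
      have s2eq : (∑ m ∈ Finset.range (k+1), ∑ w : Perm (Fin m),
            if 2 ≤ m ∧ HeadZero w ∧ Occurs w t then mu permOne ⟨m, w⟩ else 0)
          = ∑ m ∈ Finset.range (k+1), ∑ w : Perm (Fin m),
            if 1 ≤ m ∧ Occurs (Op w) t then mu permOne ⟨m+1, Op w⟩ else 0 := by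
        have hre := reindex k
          (fun m z => if 2 ≤ m ∧ HeadZero z ∧ Occurs z t then mu permOne ⟨m, z⟩ else 0)
          (by
            intro m z hz
            rw [if_neg]
            rintro ⟨-, hHZ, -⟩
            exact hz ((headZero_iff z).1 hHZ))
          (by
            intro z
            rw [if_neg]
            rintro ⟨h, -⟩
            omega)
        rw [Finset.sum_range_succ] at hre
        have htop : (∑ z : Perm (Fin (k+1)),
            if 2 ≤ k+1 ∧ HeadZero z ∧ Occurs z t then mu permOne ⟨k+1, z⟩ else 0) = 0 := by
          apply Finset.sum_eq_zero
          intro z _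
          rw [if_neg]
          rintro ⟨-, hHZ, hocc⟩
          have hzt : z = t := occurs_eq_of_len_eq hocc
          exact ht0 (by rw [← hzt]; exact (headZero_iff z).1 hHZ)
        rw [htop, add_zero] at hre
        rw [hre]
        apply Finset.sum_congr rfl
        intro m _
        apply Finset.sum_congr rfl
        intro w _
        have hOZ : HeadZero (Op w) := headZero_op w
        by_cases h1m : 1 ≤ m
        · have h2m : 2 ≤ m + 1 := by omega
          by_cases hO : Occurs (Op w) t <;> simp [hOZ, h1m, h2m, hO]
        · have h2m : ¬ (2 ≤ m + 1) := by omega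
          simp [h1m, h2m]
      have s1negs2 : (∑ m ∈ Finset.range (k+1), ∑ w : Perm (Fin m),
            if 1 ≤ m ∧ Occurs (Op w) t then - mu permOne ⟨m+1, Op w⟩ else 0)
          = - ∑ m ∈ Finset.range (k+1), ∑ w : Perm (Fin m),
            if 1 ≤ m ∧ Occurs (Op w) t then mu permOne ⟨m+1, Op w⟩ else 0 := by
        rw [← Finset.sum_neg_distrib]
        apply Finset.sum_congr rfl
        intro m _
        rw [← Finset.sum_neg_distrib]
        apply Finset.sum_congr rfl
        intro w _
        split_ifs <;> simp
      rw [s1eq, s1negs2, ← s2eq] at step3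
      rw [hmain, hG]
      linarith [step3]

end Key

section RC
variable {n m : ℕ}

/-- reverse-complement of a permutation -/
def rc (π : Perm (Fin n)) : Perm (Fin n) :=
  (Fin.revPerm.trans π).trans Fin.revPerm

lemma rc_apply (π : Perm (Fin n)) (i : Fin n) : rc π i = (π i.rev).rev := rfl

@[simp] lemma rc_rc (π : Perm (Fin n)) : rc (rc π) = π := by
  ext i
  simp [rc_apply, Fin.rev_rev]

lemma occurs_rc {σ : Perm (Fin m)} {π : Perm (Fin n)} (h : Occurs σ π) :
    Occurs (rc σ) (rc π) := by
  obtain ⟨f, hf, hiff⟩ := h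
  refine ⟨fun a => (f a.rev).rev, ?_, ?_⟩
  · intro a b hab
    have h1 : b.rev < a.rev := by rwa [Fin.rev_lt_rev]
    have h2 : f b.rev < f a.rev := hf h1
    rwa [Fin.rev_lt_rev]
  · intro a b
    rw [rc_apply, rc_apply, rc_apply, rc_apply, Fin.rev_rev, Fin.rev_rev,
      Fin.rev_lt_rev, Fin.rev_lt_rev]
    exact hiff b.rev a.rev

lemma occurs_rc_iff {σ : Perm (Fin m)} {π : Perm (Fin n)} :
    Occurs (rc σ) (rc π) ↔ Occurs σ π := by
  constructor
  · intro h
    have := occurs_rc h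
    rwa [rc_rc, rc_rc] at this
  · exact occurs_rc

/-- the rc map as an equivalence on permutations of fixed length -/
def rcEquiv (m : ℕ) : Perm (Fin m) ≃ Perm (Fin m) :=
  ⟨rc, rc, rc_rc, rc_rc⟩

end RC

section MuRC
variable {mu : PermWord → PermWord → ℤ} (hmu : IsMobius mu)
include hmu

lemma mu_rc : ∀ N : ℕ, ∀ π : Perm (Fin N), mu permOne ⟨N, π⟩ = mu permOne ⟨N, rc π⟩ := by
  intro N
  induction N using Nat.strong_induction_on with
  | _ N IH =>
  intro π
  match N with
  | 0 =>
    have h1 : ¬ PatLE permOne ⟨0, π⟩ := by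
      rw [patle_one_iff]; omega
    have h2 : ¬ PatLE permOne ⟨0, rc π⟩ := by
      rw [patle_one_iff]; omega
    rw [hmu.2.2 _ _ h1, hmu.2.2 _ _ h2]
  | 1 =>
    haveI : Subsingleton (Fin 1) := ⟨fun a b => Fin.ext (by omega)⟩
    rw [Subsingleton.elim (rc π) π]
  | (M+2) =>
    rw [mu_rec hmu π (by omega), mu_rec hmu (rc π) (by omega)]
    congr 1
    apply Finset.sum_congr rfl
    intro m hm
    have hmN : m < M + 2 := Finset.mem_range.mp hm
    rw [← Equiv.sum_comp (rcEquiv m)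
      (fun z : Perm (Fin m) => if 1 ≤ m ∧ Occurs z (rc π) then mu permOne ⟨m, z⟩ else 0)]
    apply Finset.sum_congr rfl
    intro z _
    have heq : (rcEquiv m) z = rc z := rfl
    rw [heq]
    by_cases h : 1 ≤ m ∧ Occurs z π
    · rw [if_pos h, if_pos ⟨h.1, occurs_rc h.2⟩]
      exact IH m hmN z
    · rw [if_neg h, if_neg]
      rintro ⟨h1, h2⟩
      exact h ⟨h1, occurs_rc_iff.mp h2⟩

end MuRC

section Final
variable {mu : PermWord → PermWord → ℤ} (hmu : IsMobius mu)
include hmu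

lemma mu_begin {k : ℕ} (hk : 1 ≤ k) (π : Perm (Fin (k+2)))
    (h0 : π 0 = 0) (h1 : π 1 = 1) : mu permOne ⟨k+2, π⟩ = 0 := by
  have hq : Op (Equiv.Perm.decomposeFin π).2 = π := Op_decompose π h0
  have ht0 : (Equiv.Perm.decomposeFin π).2 0 = 0 := by
    have h2 : Op (Equiv.Perm.decomposeFin π).2 (Fin.succ 0) = π 1 := by
      rw [hq, Fin.succ_zero_eq_one]
    rw [Op_succ, h1] at h2
    have h3 := congrArg Fin.val h2
    simp only [Fin.val_succ, Fin.val_one] at h3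
    exact Fin.ext (by simp only [Fin.val_zero]; omega)
  rw [← hq]
  exact (key hmu k (Equiv.Perm.decomposeFin π).2).1 ht0 hk

end Final

/-- If `π` has length `n ≥ 3`, at most one descent, and begins with 1,2 or ends with
`n-1`, `n`, then μ(1, π) = 0. -/
theorem mobius_eq_zero_of_begins_or_ends (mu : PermWord → PermWord → ℤ)
    (hmu : IsMobius mu) {n : ℕ} (hn : 3 ≤ n) (π : Equiv.Perm (Fin n))
    (hd : descentCount π ≤ 1)
    (h : ((π ⟨0, by omega⟩ : ℕ) = 0 ∧ (π ⟨1, by omega⟩ : ℕ) = 1) ∨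
      ((π ⟨n - 2, by omega⟩ : ℕ) = n - 2 ∧ (π ⟨n - 1, by omega⟩ : ℕ) = n - 1)) :
    mu permOne ⟨n, π⟩ = 0 := by
  obtain ⟨k, rfl⟩ : ∃ k, n = k + 2 := ⟨n - 2, by omega⟩
  have hk : 1 ≤ k := by omega
  rcases h with ⟨ha, hb⟩ | ⟨ha, hb⟩
  · -- begins with 1, 2
    have e0 : (⟨0, by omega⟩ : Fin (k+2)) = 0 := Fin.ext (by simp)
    have e1 : (⟨1, by omega⟩ : Fin (k+2)) = 1 := Fin.ext (by simp)
    rw [e0] at ha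
    rw [e1] at hb
    have h0 : π 0 = 0 := Fin.ext (by simpa using ha)
    have h1 : π 1 = 1 := Fin.ext (by simpa using hb)
    exact mu_begin hmu hk π h0 h1
  · -- ends with n-1, n : use reverse-complement symmetry
    rw [mu_rc hmu (k+2) π]
    have ha' : (π ⟨k, by omega⟩ : ℕ) = k := ha
    have hb' : (π ⟨k+1, by omega⟩ : ℕ) = k+1 := hb
    have hπa : π ⟨k, by omega⟩ = ⟨k, by omega⟩ := Fin.ext (by simpa using ha')
    have hπb : π ⟨k+1, by omega⟩ = ⟨k+1, by omega⟩ := Fin.ext (by simpa using hb')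
    have h0 : rc π 0 = 0 := by
      have hrev0 : (0 : Fin (k+2)).rev = ⟨k+1, by omega⟩ := Fin.ext (by simp [Fin.val_rev])
      rw [rc_apply, hrev0, hπb]
      exact Fin.ext (by simp [Fin.val_rev])
    have h1 : rc π 1 = 1 := by
      have hrev1 : (1 : Fin (k+2)).rev = ⟨k, by omega⟩ := Fin.ext (by simp [Fin.val_rev])
      rw [rc_apply, hrev1, hπa]
      exact Fin.ext (by simp [Fin.val_rev])
    exact mu_begin hmu hk (rc π) h0 h1
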